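/- arXiv:2403.09503 — 3 statements merged into one kernel-verified Lean document; each statement's English description precedes it below -/
import Mathlib

section
/- Deterministic version of the renormalization lemma: let (σ_n) and (c_n) be positive real sequences with σ_n → 0, let b ∈ ℝ^p with ‖b‖₂ = 1, A ∈ ℝ^p fixed, and (B_n) a sequence in ℝ^p with σ_n^{-1}(B_n/c_n − b) → A. Then σ_n^{-1}(B_n/‖B_n‖₂ − b) → A − ⟨b, A⟩ b. -/
open scoped RealInnerProductSpace
open Filter Topology

theorem stmt3 {p : ℕ} (σ c : ℕ → ℝ) (hσpos : ∀ n, 0 < σ n) (hcpos : ∀ n, 0 < c n)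
    (hσ : Tendsto σ atTop (𝓝 0))
    (b A : EuclideanSpace ℝ (Fin p)) (hb : ‖b‖ = 1)
    (B : ℕ → EuclideanSpace ℝ (Fin p))
    (hconv : Tendsto (fun n => (σ n)⁻¹ • ((c n)⁻¹ • B n - b)) atTop (𝓝 A)) :
    Tendsto (fun n => (σ n)⁻¹ • ((‖B n‖)⁻¹ • B n - b)) atTop (𝓝 (A - ⟪b, A⟫ • b)) := by
  set D : ℕ → EuclideanSpace ℝ (Fin p) := fun n => (c n)⁻¹ • B n with hDdef
  set E : ℕ → EuclideanSpace ℝ (Fin p) := fun n => (σ n)⁻¹ • (D n - b) with hEdef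
  have hσne : ∀ n, σ n ≠ 0 := fun n => (hσpos n).ne'
  have hcne : ∀ n, c n ≠ 0 := fun n => (hcpos n).ne'
  have hE : Tendsto E atTop (𝓝 A) := hconv
  have hD : ∀ n, D n = b + σ n • E n := by
    intro n
    simp [hEdef, smul_smul, mul_inv_cancel₀ (hσne n)]
  have hDlim : Tendsto D atTop (𝓝 b) := by
    have h0 : Tendsto (fun n => σ n • E n) atTop (𝓝 ((0:ℝ) • A)) := hσ.smul hE
    rw [zero_smul] at h0
    have := (tendsto_const_nhds (x := b) (f := atTop)).add h0
    rw [add_zero] at this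
    exact this.congr fun n => (hD n).symm
  have hnD : Tendsto (fun n => ‖D n‖) atTop (𝓝 1) := by
    have := hDlim.norm
    rwa [hb] at this
  have hip : Tendsto (fun n => ⟪b, E n⟫) atTop (𝓝 ⟪b, A⟫) :=
    (tendsto_const_nhds (x := b)).inner hE
  have hnormsq : ∀ n, ‖D n‖ ^ 2 = 1 + σ n * (2 * ⟪b, E n⟫ + σ n * ‖E n‖ ^ 2) := by
    intro n
    rw [hD n, norm_add_sq_real, real_inner_smul_right, norm_smul, hb]
    rw [Real.norm_eq_abs, abs_of_pos (hσpos n)]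
    ring
  -- key scalar limit
  have hg : Tendsto (fun n => (σ n)⁻¹ * (‖D n‖ - 1)) atTop (𝓝 ⟪b, A⟫) := by
    have hden : Tendsto (fun n => ‖D n‖ + 1) atTop (𝓝 2) := by
      have := hnD.add (tendsto_const_nhds (x := (1:ℝ)))
      norm_num at this
      exact this
    have hnum : Tendsto (fun n => 2 * ⟪b, E n⟫ + σ n * ‖E n‖ ^ 2) atTop
        (𝓝 (2 * ⟪b, A⟫)) := by
      have h1 : Tendsto (fun n => σ n * ‖E n‖ ^ 2) atTop (𝓝 (0 * ‖A‖ ^ 2)) :=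
        hσ.mul ((hE.norm).pow 2)
      rw [zero_mul] at h1
      have := ((tendsto_const_nhds (x := (2:ℝ))).mul hip).add h1
      rwa [add_zero] at this
    have hdiv := hnum.div hden (by norm_num)
    have heq : ∀ n, (σ n)⁻¹ * (‖D n‖ - 1)
        = (2 * ⟪b, E n⟫ + σ n * ‖E n‖ ^ 2) / (‖D n‖ + 1) := by
      intro n
      have hd1 : (‖D n‖ + 1) ≠ 0 := by positivity
      have hs := hσne n
      have hsq := hnormsq n
      rw [eq_div_iff hd1, inv_mul_eq_div, div_mul_eq_mul_div, div_eq_iff hs]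
      linear_combination hsq
    have : (2 * ⟪b, A⟫) / 2 = ⟪b, A⟫ := by ring
    rw [this] at hdiv
    exact hdiv.congr fun n => (heq n).symm
  have hnDinv : Tendsto (fun n => ‖D n‖⁻¹) atTop (𝓝 1) := by
    have := hnD.inv₀ one_ne_zero
    rwa [inv_one] at this
  have hpos : ∀ᶠ n in atTop, (0:ℝ) < ‖D n‖ :=
    hnD.eventually (eventually_gt_nhds one_pos)
  have hevent : ∀ᶠ n in atTop,
      (σ n)⁻¹ • ((‖B n‖)⁻¹ • B n - b)
        = ‖D n‖⁻¹ • E n + (-((σ n)⁻¹ * (‖D n‖ - 1)) * ‖D n‖⁻¹) • b := by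
    filter_upwards [hpos] with n hdn
    have hBD : (‖B n‖)⁻¹ • B n = ‖D n‖⁻¹ • D n := by
      have hBn : B n = c n • D n := by
        simp [hDdef, smul_smul, mul_inv_cancel₀ (hcne n)]
      rw [hBn, norm_smul, Real.norm_eq_abs, abs_of_pos (hcpos n), mul_inv,
        smul_smul, mul_assoc, mul_comm (‖D n‖⁻¹) (c n), ← mul_assoc,
        inv_mul_cancel₀ (hcne n), one_mul]
    rw [hBD, hD n]
    have hs := hσne n
    have hd : ‖b + σ n • E n‖ ≠ 0 := by rw [← hD n]; exact hdn.ne'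
    match_scalars
    · field_simp
      ring
    · field_simp
  have hlim : Tendsto (fun n => ‖D n‖⁻¹ • E n
      + (-((σ n)⁻¹ * (‖D n‖ - 1)) * ‖D n‖⁻¹) • b) atTop
      (𝓝 ((1:ℝ) • A + (-⟪b, A⟫ * 1) • b)) :=
    (hnDinv.smul hE).add (((hg.neg).mul hnDinv).smul tendsto_const_nhds)
  have : (1:ℝ) • A + (-⟪b, A⟫ * 1) • b = A - ⟪b, A⟫ • b := by
    simp [sub_eq_add_neg, neg_smul]
  rw [this] at hlim
  exact hlim.congr' (hevent.mono fun n h => h.symm)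
end

section
/- Sparse MAP characterization: let v ∈ ℝ^p and λ ≥ 0 be such that S_λ(v) ≠ 0, where S_λ is applied coordinate-wise. Then the maximizer over the unit sphere {β ∈ ℝ^p : ‖β‖₂ = 1} of the function β ↦ ⟨β, v⟩ − λ‖β‖₁ is β* = S_λ(v)/‖S_λ(v)‖₂. -/
open scoped RealInnerProductSpace

/-- Soft-thresholding (shrinkage) operator `S_λ(x) = sign(x)(|x| − λ) 1{|x| > λ}`. -/
noncomputable def softThresh (lam x : ℝ) : ℝ :=
  Real.sign x * (|x| - lam) * (if lam < |x| then 1 else 0)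

/-!
For each coordinate, `b x - λ|b| ≤ |b| (|x| - λ) ≤ |b| |S_λ(x)|`, and for `b = S_λ(x)` the left
side equals `S_λ(x)²`. Summing, and applying Cauchy–Schwarz to `(|β_j|)` and `(|S_λ(v_j)|)`, bounds
the objective on the unit sphere by `‖S_λ(v)‖`; by positive homogeneity its value at
`S_λ(v)/‖S_λ(v)‖` is `‖S_λ(v)‖² / ‖S_λ(v)‖`, so the bound is attained there.
-/

namespace Real

theorem sign_mul_self_eq_abs (x : ℝ) : sign x * x = |x| := by
  rcases lt_trichotomy x 0 with h | rfl | h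
  · rw [sign_of_neg h, abs_of_neg h, neg_one_mul]
  · simp
  · rw [sign_of_pos h, abs_of_pos h, one_mul]

theorem abs_sign_of_ne_zero {x : ℝ} (hx : x ≠ 0) : |sign x| = 1 := by
  rcases sign_apply_eq_of_ne_zero x hx with h | h <;> simp [h]

end Real

section SoftThreshold

variable {lam : ℝ} (x : ℝ)

theorem abs_softThresh (hlam : 0 ≤ lam) : |softThresh lam x| = max (|x| - lam) 0 := by
  unfold softThresh
  split_ifs with h
  · have hx : x ≠ 0 := by rintro rfl; simp only [abs_zero] at h; linarith
    rw [mul_one, abs_mul, Real.abs_sign_of_ne_zero hx, one_mul, abs_of_pos (sub_pos.2 h),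
      max_eq_left (sub_pos.2 h).le]
  · rw [mul_zero, abs_zero, max_eq_right (sub_nonpos.2 (not_lt.1 h))]

theorem softThresh_mul_self : softThresh lam x * x = |x| * max (|x| - lam) 0 := by
  unfold softThresh
  split_ifs with h
  · rw [max_eq_left (sub_pos.2 h).le, ← Real.sign_mul_self_eq_abs]
    ring
  · rw [max_eq_right (sub_nonpos.2 (not_lt.1 h))]
    ring

theorem softThresh_mul_sub_abs (hlam : 0 ≤ lam) :
    softThresh lam x * x - lam * |softThresh lam x| = softThresh lam x ^ 2 := by
  rw [← sq_abs, abs_softThresh x hlam, softThresh_mul_self]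
  rcases le_total (|x| - lam) 0 with h | h
  · simp [max_eq_right h]
  · rw [max_eq_left h]
    ring

theorem mul_sub_abs_le_abs_mul_abs_softThresh (hlam : 0 ≤ lam) (b : ℝ) :
    b * x - lam * |b| ≤ |b| * |softThresh lam x| := by
  calc b * x - lam * |b| ≤ |b| * (|x| - lam) := by
        nlinarith [abs_mul_abs_self b, abs_mul b x, le_abs_self (b * x)]
    _ ≤ |b| * |softThresh lam x| := by
        rw [abs_softThresh x hlam]
        exact mul_le_mul_of_nonneg_left (le_max_left _ _) (abs_nonneg b)

end SoftThreshold

section SparseObjective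

variable {ι : Type*} [Fintype ι]

theorem sum_abs_mul_abs_le_norm_mul_norm (x y : EuclideanSpace ℝ ι) :
    ∑ j, |x j| * |y j| ≤ ‖x‖ * ‖y‖ := by
  simpa only [EuclideanSpace.norm_eq, Real.norm_eq_abs] using
    Real.sum_mul_le_sqrt_mul_sqrt Finset.univ (fun j ↦ |x j|) (fun j ↦ |y j|)

noncomputable def sparseObjective (lam : ℝ) (v β : EuclideanSpace ℝ ι) : ℝ :=
  ⟪β, v⟫ - lam * ∑ j, |β j|

variable {lam : ℝ} {v w : EuclideanSpace ℝ ι}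

theorem sparseObjective_smul_of_nonneg {c : ℝ} (hc : 0 ≤ c) (β : EuclideanSpace ℝ ι) :
    sparseObjective lam v (c • β) = c * sparseObjective lam v β := by
  simp only [sparseObjective, real_inner_smul_left, PiLp.smul_apply, smul_eq_mul, abs_mul,
    abs_of_nonneg hc, ← Finset.mul_sum]
  ring

theorem sparseObjective_le_norm_mul_norm (hlam : 0 ≤ lam) (hw : ∀ j, w j = softThresh lam (v j))
    (β : EuclideanSpace ℝ ι) : sparseObjective lam v β ≤ ‖β‖ * ‖w‖ := by
  calc sparseObjective lam v β = ∑ j, (β j * v j - lam * |β j|) := by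
        simp [sparseObjective, PiLp.inner_apply, Finset.mul_sum, mul_comm]
    _ ≤ ∑ j, |β j| * |w j| := Finset.sum_le_sum fun j _ ↦ by
        rw [hw j]
        exact mul_sub_abs_le_abs_mul_abs_softThresh _ hlam _
    _ ≤ ‖β‖ * ‖w‖ := sum_abs_mul_abs_le_norm_mul_norm β w

theorem sparseObjective_eq_norm_sq (hlam : 0 ≤ lam) (hw : ∀ j, w j = softThresh lam (v j)) :
    sparseObjective lam v w = ‖w‖ ^ 2 := by
  calc sparseObjective lam v w = ∑ j, (w j * v j - lam * |w j|) := by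
        simp [sparseObjective, PiLp.inner_apply, Finset.mul_sum, mul_comm]
    _ = ∑ j, w j ^ 2 := Finset.sum_congr rfl fun j _ ↦ by
        rw [hw j]
        exact softThresh_mul_sub_abs _ hlam
    _ = ‖w‖ ^ 2 := by
        simp [EuclideanSpace.norm_eq, Finset.sum_nonneg, sq_nonneg]

end SparseObjective

theorem stmt6 {p : ℕ} (v : EuclideanSpace ℝ (Fin p)) (lam : ℝ) (hlam : 0 ≤ lam)
    (w : EuclideanSpace ℝ (Fin p)) (hw : ∀ j, w j = softThresh lam (v j)) (hw0 : w ≠ 0) :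
    ‖(‖w‖⁻¹ • w : EuclideanSpace ℝ (Fin p))‖ = 1 ∧
    ∀ β : EuclideanSpace ℝ (Fin p), ‖β‖ = 1 →
      ⟪β, v⟫ - lam * ∑ j, |β j| ≤ ⟪‖w‖⁻¹ • w, v⟫ - lam * ∑ j, |(‖w‖⁻¹ • w : EuclideanSpace ℝ (Fin p)) j| := by
  refine ⟨norm_smul_inv_norm hw0, fun β hβ ↦ ?_⟩
  change sparseObjective lam v β ≤ sparseObjective lam v (‖w‖⁻¹ • w)
  have hw_pos : 0 < ‖w‖ := norm_pos_iff.2 hw0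
  calc sparseObjective lam v β ≤ ‖β‖ * ‖w‖ := sparseObjective_le_norm_mul_norm hlam hw β
    _ = ‖w‖⁻¹ * ‖w‖ ^ 2 := by rw [hβ]; field_simp
    _ = sparseObjective lam v (‖w‖⁻¹ • w) := by
        rw [sparseObjective_smul_of_nonneg (inv_nonneg.2 hw_pos.le),
          sparseObjective_eq_norm_sq hlam hw]
end

section
/- Deterministic asymptotics of the sparse MAP, nonzero coordinates: let β ∈ ℝ^p with ‖β‖₂ = 1, λ ≥ 0, c > 0, (σ_n) positive with σ_n → 0, (K_n) positive with σ_n K_n → c, and (β_n) a sequence of unit vectors with σ_n^{-1}(β_n − β) → 0. Define β̃_n coordinate-wise by β̃_{n,j} = S_λ(K_n β_{n,j}) and β_n^s = β̃_n/‖β̃_n‖₂. Then for every j with β_j ≠ 0, σ_n^{-1}(β^s_{n,j} − β_j) → (λ/c)(‖β‖₁ β_j − sign(β_j)). -/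
/-!
Dividing by `K_n` does not change the normalised vector, and `K_n⁻¹ w_n` is soft thresholding of
`β_n` at the level `λ / K_n`, which is `(λ / c) σ_n + o(σ_n)`. Coordinatewise, for `β_i ≠ 0` the
threshold is eventually exceeded with the sign of `β_i`, while for `β_i = 0` the thresholded
coordinate is dominated by `β_{n,i} = o(σ_n)`; hence `σ_n⁻¹ (K_n⁻¹ w_n − β) → −(λ / c) sign β`.
The normalisation `x ↦ x / ‖x‖` is differentiable at the unit vector `β` with derivative
`v ↦ v − ⟨β, v⟩ β`, so the rescaled error of `w_n / ‖w_n‖` tends to this derivative applied to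
`−(λ / c) sign β`, whose `j`-th coordinate is `(λ / c) (‖β‖₁ β_j − sign β_j)`.
-/

open Filter Topology

theorem Real.sign_eq_coe_sign (r : ℝ) : Real.sign r = (SignType.sign r : ℝ) := by
  rcases lt_trichotomy r 0 with h | rfl | h
  · simp [Real.sign_of_neg h, h]
  · simp
  · simp [Real.sign_of_pos h, h]

theorem Real.eventually_sign_eq_of_tendsto {α : Type*} {l : Filter α} {b : α → ℝ} {b₀ : ℝ}
    (hb : Tendsto b l (𝓝 b₀)) (hb₀ : b₀ ≠ 0) : ∀ᶠ n in l, Real.sign (b n) = Real.sign b₀ := by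
  have h := (continuousAt_sign_of_ne_zero hb₀).tendsto.comp hb
  rw [nhds_discrete, tendsto_pure] at h
  exact h.mono fun n hn => by simp only [Real.sign_eq_coe_sign, ← hn, Function.comp_apply]

theorem softThresh_of_lt {lam x : ℝ} (h : lam < |x|) :
    softThresh lam x = x - lam * Real.sign x := by
  rw [softThresh, if_pos h, Real.sign_eq_coe_sign]
  linear_combination sign_mul_abs x

theorem abs_softThresh_le {lam : ℝ} (hlam : 0 ≤ lam) (x : ℝ) : |softThresh lam x| ≤ |x| := by
  by_cases h : lam < |x|
  · rw [softThresh_of_lt h]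
    rcases lt_trichotomy x 0 with hx | rfl | hx
    · rw [abs_of_neg hx] at h ⊢
      rw [Real.sign_of_neg hx, abs_of_neg (by linarith)]
      linarith
    · simp
    · rw [abs_of_pos hx] at h ⊢
      rw [Real.sign_of_pos hx, abs_of_nonneg (by linarith)]
      linarith
  · simp [softThresh, h]

theorem softThresh_mul_mul {r : ℝ} (hr : 0 < r) (lam x : ℝ) :
    softThresh (r * lam) (r * x) = r * softThresh lam x := by
  simp only [softThresh, abs_mul, abs_of_pos hr, mul_lt_mul_iff_right₀ hr, Real.sign_eq_coe_sign,
    sign_mul, sign_pos hr, SignType.coe_mul, SignType.coe_one]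
  ring

theorem tendsto_zero_of_tendsto_inv_smul {α E : Type*} [NormedAddCommGroup E] [NormedSpace ℝ E]
    {l : Filter α} {σ : α → ℝ} {u : α → E} {L : E} (hσ : Tendsto σ l (𝓝 0))
    (hσ0 : ∀ n, σ n ≠ 0) (hu : Tendsto (fun n => (σ n)⁻¹ • u n) l (𝓝 L)) :
    Tendsto u l (𝓝 0) := by
  simpa [smul_smul, mul_inv_cancel₀ (hσ0 _)] using hσ.smul hu

section SoftThresholdingAsymptotics

variable {α : Type*} {l : Filter α} {σ t b : α → ℝ} {b₀ τ : ℝ}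

theorem tendsto_inv_mul_softThresh_of_tendsto_inv_mul (ht : ∀ n, 0 ≤ t n)
    (hb : Tendsto (fun n => (σ n)⁻¹ * b n) l (𝓝 0)) :
    Tendsto (fun n => (σ n)⁻¹ * softThresh (t n) (b n)) l (𝓝 0) := by
  refine squeeze_zero_norm (fun n => ?_) (tendsto_zero_iff_norm_tendsto_zero.1 hb)
  simp only [norm_mul]
  exact mul_le_mul_of_nonneg_left (abs_softThresh_le (ht n) _) (norm_nonneg _)

theorem tendsto_inv_mul_softThresh_sub (hσ : Tendsto σ l (𝓝 0)) (hσ0 : ∀ n, σ n ≠ 0)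
    (ht : ∀ n, 0 ≤ t n) (hτ : Tendsto (fun n => (σ n)⁻¹ * t n) l (𝓝 τ))
    (hb : Tendsto (fun n => (σ n)⁻¹ * (b n - b₀)) l (𝓝 0)) :
    Tendsto (fun n => (σ n)⁻¹ * (softThresh (t n) (b n) - b₀)) l
      (𝓝 (-(τ * Real.sign b₀))) := by
  rcases eq_or_ne b₀ 0 with rfl | hb₀
  · simp only [sub_zero, Real.sign_zero, mul_zero, neg_zero] at hb ⊢
    exact tendsto_inv_mul_softThresh_of_tendsto_inv_mul ht hb
  have hb_lim : Tendsto b l (𝓝 b₀) :=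
    tendsto_sub_nhds_zero_iff.1 (tendsto_zero_of_tendsto_inv_smul hσ hσ0 hb)
  have ht_lim : Tendsto t l (𝓝 0) := tendsto_zero_of_tendsto_inv_smul hσ hσ0 hτ
  have hlt : ∀ᶠ n in l, t n < |b n| := ht_lim.eventually_lt hb_lim.abs (abs_pos.2 hb₀)
  have hsign := Real.eventually_sign_eq_of_tendsto hb_lim hb₀
  have hlim := hb.sub (hτ.mul_const (Real.sign b₀))
  rw [zero_sub] at hlim
  refine hlim.congr' ?_
  filter_upwards [hlt, hsign] with n hn hsn
  rw [softThresh_of_lt hn, hsn]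
  ring

end SoftThresholdingAsymptotics

theorem EuclideanSpace.tendsto_nhds_iff {ι α : Type*} [Fintype ι] {l : Filter α}
    {u : α → EuclideanSpace ℝ ι} {v : EuclideanSpace ℝ ι} :
    Tendsto u l (𝓝 v) ↔ ∀ i, Tendsto (fun n => u n i) l (𝓝 (v i)) := by
  rw [(PiLp.homeomorph 2 _).isInducing.tendsto_nhds_iff, tendsto_pi_nhds]
  rfl

theorem EuclideanSpace.inner_toLp_sign {ι : Type*} [Fintype ι] (x : EuclideanSpace ℝ ι) :
    inner ℝ x (WithLp.toLp 2 fun i => Real.sign (x i)) = ∑ i, |x i| := by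
  simp [PiLp.inner_apply, Real.sign_eq_coe_sign, sign_mul_self]

section Normalize

variable {E : Type*} [NormedAddCommGroup E] [InnerProductSpace ℝ E]

theorem hasFDerivAt_norm_of_ne_zero {x : E} (hx : x ≠ 0) :
    HasFDerivAt (‖·‖) (‖x‖⁻¹ • innerSL ℝ x) x := by
  have h := (hasStrictFDerivAt_norm_sq x).hasFDerivAt.sqrt (by positivity)
  simp only [Real.sqrt_sq (norm_nonneg _)] at h
  convert h using 1
  ext y
  simp only [smul_apply, coe_innerSL_apply, smul_eq_mul, one_div, mul_inv_rev,
    nsmul_eq_mul, Nat.cast_ofNat]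
  field_simp

theorem hasFDerivAt_normalize_of_norm_eq_one {x : E} (hx : ‖x‖ = 1) :
    HasFDerivAt NormedSpace.normalize
      (ContinuousLinearMap.id ℝ E - (innerSL ℝ x).smulRight x) x := by
  have hx0 : x ≠ 0 := norm_ne_zero_iff.1 (by rw [hx]; norm_num)
  have h := ((hasDerivAt_inv (norm_ne_zero_iff.2 hx0)).comp_hasFDerivAt x
    (hasFDerivAt_norm_of_ne_zero hx0)).smul (hasFDerivAt_id x)
  convert h using 1
  · ext y
    rfl
  · ext y
    simp [hx, sub_eq_add_neg]

end Normalize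

theorem stmt10_general {p : ℕ} (β : EuclideanSpace ℝ (Fin p)) (hβ : ‖β‖ = 1)
    (lam : ℝ) (hlam : 0 ≤ lam) (c : ℝ) (hc : 0 < c)
    (σ K : ℕ → ℝ) (hσpos : ∀ n, 0 < σ n) (hKpos : ∀ n, 0 < K n)
    (hσ : Tendsto σ atTop (𝓝 0))
    (hσK : Tendsto (fun n => σ n * K n) atTop (𝓝 c))
    (βn : ℕ → EuclideanSpace ℝ (Fin p))
    (hβconv : Tendsto (fun n => (σ n)⁻¹ • (βn n - β)) atTop (𝓝 0))
    (w : ℕ → EuclideanSpace ℝ (Fin p))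
    (hw : ∀ n j, w n j = softThresh lam (K n * βn n j))
    (j : Fin p) :
    Tendsto (fun n => (σ n)⁻¹ * ((‖w n‖⁻¹ • w n : EuclideanSpace ℝ (Fin p)) j - β j)) atTop
      (𝓝 ((lam / c) * ((∑ i, |β i|) * β j - Real.sign (β j)))) := by
  have hσ0 n := (hσpos n).ne'
  have hscaled n i : ((K n)⁻¹ • w n) i = softThresh (lam / K n) (βn n i) := by
    have h := softThresh_mul_mul (hKpos n) (lam / K n) (βn n i)
    rw [mul_div_cancel₀ _ (hKpos n).ne'] at h
    rw [PiLp.smul_apply, hw, h, smul_eq_mul, inv_mul_cancel_left₀ (hKpos n).ne']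
  have hthresh : Tendsto (fun n => (σ n)⁻¹ * (lam / K n)) atTop (𝓝 (lam / c)) := by
    simpa [div_eq_mul_inv, mul_comm, mul_left_comm] using (hσK.inv₀ hc.ne').const_mul lam
  have hdir : Tendsto (fun n => (σ n)⁻¹ • ((K n)⁻¹ • w n - β)) atTop
      (𝓝 (-(lam / c) • WithLp.toLp 2 fun i => Real.sign (β i))) := by
    rw [EuclideanSpace.tendsto_nhds_iff] at hβconv ⊢
    intro i
    simpa [hscaled, mul_assoc] using tendsto_inv_mul_softThresh_sub hσ hσ0
      (fun n => div_nonneg hlam (hKpos n).le) hthresh (by simpa using hβconv i)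
  have hnormalize := ((hasFDerivAt_normalize_of_norm_eq_one hβ).hasFDerivWithinAt
    (s := Set.univ)).lim (tendsto_zero_of_tendsto_inv_smul hσ hσ0 hdir)
    (Eventually.of_forall fun _ => Set.mem_univ _) hdir
  simp only [add_sub_cancel, NormedSpace.normalize_smul_of_pos (inv_pos.2 (hKpos _)),
    NormedSpace.normalize_eq_self_of_norm_eq_one hβ] at hnormalize
  convert ((PiLp.continuous_apply 2 _ j).tendsto _).comp hnormalize using 2
  · simp [NormedSpace.normalize, mul_sub]
  · simp only [sub_apply, ContinuousLinearMap.id_apply,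
      ContinuousLinearMap.smulRight_apply, coe_innerSL_apply, neg_smul, inner_neg_right,
      inner_smul_right, EuclideanSpace.inner_toLp_sign, sub_neg_eq_add, PiLp.add_apply,
      PiLp.neg_apply, PiLp.smul_apply, smul_eq_mul]
    ring

theorem stmt10 {p : ℕ} (β : EuclideanSpace ℝ (Fin p)) (hβ : ‖β‖ = 1)
    (lam : ℝ) (hlam : 0 ≤ lam) (c : ℝ) (hc : 0 < c)
    (σ K : ℕ → ℝ) (hσpos : ∀ n, 0 < σ n) (hKpos : ∀ n, 0 < K n)
    (hσ : Tendsto σ atTop (𝓝 0))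
    (hσK : Tendsto (fun n => σ n * K n) atTop (𝓝 c))
    (βn : ℕ → EuclideanSpace ℝ (Fin p)) (hβn : ∀ n, ‖βn n‖ = 1)
    (hβconv : Tendsto (fun n => (σ n)⁻¹ • (βn n - β)) atTop (𝓝 0))
    (w : ℕ → EuclideanSpace ℝ (Fin p))
    (hw : ∀ n j, w n j = softThresh lam (K n * βn n j))
    (j : Fin p) (hj : β j ≠ 0) :
    Tendsto (fun n => (σ n)⁻¹ * ((‖w n‖⁻¹ • w n : EuclideanSpace ℝ (Fin p)) j - β j)) atTop
      (𝓝 ((lam / c) * ((∑ i, |β i|) * β j - Real.sign (β j)))) :=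
  stmt10_general β hβ lam hlam c hc σ K hσpos hKpos hσ hσK βn hβconv w hw j
end
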